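/- arXiv:2407.19399 — 2 statements merged into one kernel-verified Lean document; each statement's English description precedes it below -/
import Mathlib

section
/- Let ζ and ζ' be jointly Gaussian standard normal random variables with correlation ρ ∈ (−1, 1). If −1 < ρ ≤ 0, then for every t > 0, P(ζ ≥ t, ζ' ≥ t) ≤ G(t) · G((1−ρ) t / √(1−ρ²)), where G = 1 − Φ is the standard normal upper tail. -/
open MeasureTheory ProbabilityTheory Real Set

/-- Standard normal upper tail `G(t) = 1 − Φ(t) = ∫_t^∞ (2π)^{-1/2} e^{-x²/2} dx`. -/
noncomputable def stdNormalTail (t : ℝ) : ℝ :=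
  ∫ x in Set.Ioi t, (Real.sqrt (2 * Real.pi))⁻¹ * Real.exp (-x ^ 2 / 2)

lemma gaussianReal_Ici (a : ℝ) :
    gaussianReal 0 1 (Set.Ici a) = ENNReal.ofReal (stdNormalTail a) := by
  rw [gaussianReal_apply_eq_integral 0 one_ne_zero]
  rw [MeasureTheory.integral_Ici_eq_integral_Ioi]
  congr 1
  refine setIntegral_congr_fun measurableSet_Ioi fun x _ => ?_
  simp [gaussianPDFReal]

/-- Let `(ζ, ζ')` be jointly Gaussian standard normal with correlation
`ρ ∈ (−1, 0]` (realized as `ζ' = ρ ζ + √(1−ρ²) ζ₂` with `ζ, ζ₂` independent standard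
normals). Then for every `t > 0`,
`P(ζ ≥ t, ζ' ≥ t) ≤ G(t) · G((1−ρ) t / √(1−ρ²))`. -/
theorem stmt14 {Ω : Type*} [MeasurableSpace Ω] (μ : Measure Ω) [IsProbabilityMeasure μ]
    (ζ ζ₂ : Ω → ℝ) (hζm : Measurable ζ) (hζ₂m : Measurable ζ₂)
    (hindep : IndepFun ζ ζ₂ μ)
    (hζlaw : Measure.map ζ μ = gaussianReal 0 1)
    (hζ₂law : Measure.map ζ₂ μ = gaussianReal 0 1)
    (ρ : ℝ) (hρ₁ : -1 < ρ) (hρ₂ : ρ ≤ 0)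
    (ζ' : Ω → ℝ) (hζ' : ∀ ω, ζ' ω = ρ * ζ ω + Real.sqrt (1 - ρ ^ 2) * ζ₂ ω) :
    ∀ t : ℝ, 0 < t →
      μ {ω | t ≤ ζ ω ∧ t ≤ ζ' ω}
        ≤ ENNReal.ofReal (stdNormalTail t
            * stdNormalTail ((1 - ρ) * t / Real.sqrt (1 - ρ ^ 2))) := by
  intro t ht
  have hρsq : 0 < 1 - ρ ^ 2 := by nlinarith
  have hs : 0 < Real.sqrt (1 - ρ ^ 2) := Real.sqrt_pos.mpr hρsq
  set s : ℝ := (1 - ρ) * t / Real.sqrt (1 - ρ ^ 2) with hs_def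
  have hsub : {ω | t ≤ ζ ω ∧ t ≤ ζ' ω} ⊆ ζ ⁻¹' (Set.Ici t) ∩ ζ₂ ⁻¹' (Set.Ici s) := by
    intro ω ⟨h1, h2⟩
    refine ⟨h1, ?_⟩
    rw [hζ' ω] at h2
    have : (1 - ρ) * t ≤ Real.sqrt (1 - ρ ^ 2) * ζ₂ ω := by nlinarith
    simp only [Set.mem_preimage, Set.mem_Ici, hs_def]
    rw [div_le_iff₀ hs]
    linarith [this]
  calc μ {ω | t ≤ ζ ω ∧ t ≤ ζ' ω}
      ≤ μ (ζ ⁻¹' (Set.Ici t) ∩ ζ₂ ⁻¹' (Set.Ici s)) := measure_mono hsub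
    _ = μ (ζ ⁻¹' (Set.Ici t)) * μ (ζ₂ ⁻¹' (Set.Ici s)) :=
        hindep.measure_inter_preimage_eq_mul _ _ measurableSet_Ici measurableSet_Ici
    _ = gaussianReal 0 1 (Set.Ici t) * gaussianReal 0 1 (Set.Ici s) := by
        rw [← Measure.map_apply hζm measurableSet_Ici,
          ← Measure.map_apply hζ₂m measurableSet_Ici, hζlaw, hζ₂law]
    _ = ENNReal.ofReal (stdNormalTail t * stdNormalTail s) := by
        rw [gaussianReal_Ici, gaussianReal_Ici, ← ENNReal.ofReal_mul]
        have : 0 ≤ stdNormalTail t := by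
          apply setIntegral_nonneg measurableSet_Ioi
          intro x _
          positivity
        exact this
end

section
/- Let ζ and ζ' be jointly standard normal with correlation ρ satisfying 0 ≤ ρ < 1. Then for every t > 0, P(ζ ≥ t, ζ' ≥ t) ≤ (1+ρ) · G(t) · G((1−ρ) t / √(1−ρ²)), with G = 1 − Φ. -/
open MeasureTheory ProbabilityTheory Real Set

/-!
Write `ζ' = ρ ζ + c ζ₂` with `c = √(1 - ρ²)` and condition on `ζ₂ = y`: the event becomes
`ζ ≥ max t ((t - c y) / ρ)`. Split at `a = (1 - ρ) t / c`, equivalently `(1 + ρ) a = c t`.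
For `y > a` bound the conditional probability by `G t`; this contributes `G t · G a`.
For `y ≤ a` we have `(t - c y) / ρ = t + w` with `w = c (a - y) / ρ ≥ 0`, and the shift
bound `G (t + w) ≤ exp (-(t w + w² / 2)) G t` turns the density `φ y` into exactly
`φ (a + (a - y) / ρ)`, whose integral over `y ≤ a` is `ρ G a`.
When `ρ = 0` the event is simply the product of two tails.
-/

lemma integral_Ioi_comp_add_right {E : Type*} [NormedAddCommGroup E] [NormedSpace ℝ E]
    (f : ℝ → E) (a b : ℝ) : ∫ x in Ioi a, f (x + b) = ∫ x in Ioi (a + b), f x := by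
  rw [← integral_indicator measurableSet_Ioi, ← integral_indicator measurableSet_Ioi,
    ← integral_add_right_eq_self (fun x => (Ioi (a + b)).indicator f x) b]
  congr 1 with x
  simp [indicator_apply]

lemma integral_Iic_comp_sub_div {E : Type*} [NormedAddCommGroup E] [NormedSpace ℝ E]
    (f : ℝ → E) (a : ℝ) {ρ : ℝ} (hρ : 0 < ρ) :
    ∫ y in Iic a, f ((a - y) / ρ) = ρ • ∫ u in Ioi 0, f u := by
  have h := integral_comp_neg_Iic a (fun x => f ((x + a) / ρ))
  simp only [neg_add_eq_sub] at h
  rw [h, integral_Ioi_comp_add_right (fun x => f (x / ρ)), neg_add_cancel]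
  simp_rw [div_eq_inv_mul]
  rw [integral_comp_mul_left_Ioi _ _ (inv_pos.2 hρ), mul_zero, inv_inv]

lemma stdNormalTail_eq_integral (t : ℝ) :
    stdNormalTail t = ∫ x in Ioi t, gaussianPDFReal 0 1 x := by
  simp [stdNormalTail, gaussianPDFReal]

lemma stdNormalTail_nonneg (t : ℝ) : 0 ≤ stdNormalTail t := by
  rw [stdNormalTail_eq_integral]
  exact setIntegral_nonneg measurableSet_Ioi fun x _ => gaussianPDFReal_nonneg 0 1 x

lemma gaussianReal_Ioi_eq_stdNormalTail (t : ℝ) :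
    gaussianReal 0 1 (Ioi t) = ENNReal.ofReal (stdNormalTail t) := by
  rw [gaussianReal_apply_eq_integral _ one_ne_zero, stdNormalTail_eq_integral]

lemma gaussianReal_Ici_eq_stdNormalTail (t : ℝ) :
    gaussianReal 0 1 (Ici t) = ENNReal.ofReal (stdNormalTail t) := by
  rw [gaussianReal_apply_eq_integral _ one_ne_zero, integral_Ici_eq_integral_Ioi,
    stdNormalTail_eq_integral]

lemma gaussianPDFReal_zero_one_add (x w : ℝ) :
    gaussianPDFReal 0 1 (x + w) = exp (-(x * w + w ^ 2 / 2)) * gaussianPDFReal 0 1 x := by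
  simp only [gaussianPDFReal, NNReal.coe_one, mul_one, sub_zero]
  rw [mul_left_comm, ← exp_add]
  ring_nf

lemma stdNormalTail_add_le (t : ℝ) {w : ℝ} (hw : 0 ≤ w) :
    stdNormalTail (t + w) ≤ exp (-(t * w + w ^ 2 / 2)) * stdNormalTail t := by
  rw [stdNormalTail_eq_integral, stdNormalTail_eq_integral, ← integral_Ioi_comp_add_right,
    ← integral_const_mul]
  refine setIntegral_mono_on ((integrable_gaussianPDFReal 0 1).comp_add_right w).integrableOn
    ((integrable_gaussianPDFReal 0 1).const_mul _).integrableOn measurableSet_Ioi fun x hx => ?_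
  rw [gaussianPDFReal_zero_one_add]
  gcongr
  · exact gaussianPDFReal_nonneg 0 1 x
  · exact le_of_lt hx

lemma gaussianPDFReal_mul_stdNormalTail_le {ρ c t a y : ℝ} (hρ : 0 < ρ) (hc : 0 ≤ c)
    (hc2 : c ^ 2 = 1 - ρ ^ 2) (ha : (1 + ρ) * a = c * t) (hy : y ≤ a) :
    gaussianPDFReal 0 1 y * stdNormalTail ((t - c * y) / ρ)
      ≤ stdNormalTail t * gaussianPDFReal 0 1 (a + (a - y) / ρ) := by
  set w := c * (a - y) / ρ with hw_def
  have hw : 0 ≤ w := div_nonneg (mul_nonneg hc (sub_nonneg.2 hy)) hρ.le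
  have hca : c * a = (1 - ρ) * t :=
    mul_left_cancel₀ (by linarith : (1 + ρ) ≠ 0) (by linear_combination c * ha + t * hc2)
  have harg : (t - c * y) / ρ = t + w := by
    rw [hw_def]
    field_simp
    linear_combination -hca
  have hpdf : gaussianPDFReal 0 1 (a + (a - y) / ρ)
      = exp (-(t * w + w ^ 2 / 2)) * gaussianPDFReal 0 1 y := by
    rw [show a + (a - y) / ρ = y + (a - y) * (1 + ρ) / ρ by field_simp; ring,
      gaussianPDFReal_zero_one_add]
    congr 3
    rw [hw_def]
    field_simp
    linear_combination 2 * ρ * (a - y) * ha - (a - y) ^ 2 * hc2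
  rw [harg, hpdf]
  exact (mul_le_mul_of_nonneg_left (stdNormalTail_add_le t hw)
    (gaussianPDFReal_nonneg 0 1 y)).trans_eq (by ring)

lemma integral_Iic_gaussianPDFReal_reflect {ρ : ℝ} (hρ : 0 < ρ) (a : ℝ) :
    ∫ y in Iic a, gaussianPDFReal 0 1 (a + (a - y) / ρ) = ρ * stdNormalTail a := by
  rw [integral_Iic_comp_sub_div (fun u => gaussianPDFReal 0 1 (a + u)) a hρ, smul_eq_mul]
  simp_rw [add_comm a]
  rw [integral_Ioi_comp_add_right, zero_add, stdNormalTail_eq_integral]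

lemma setLIntegral_Iic_stdNormalTail_le {ρ c t a : ℝ} (hρ : 0 < ρ) (hc : 0 ≤ c)
    (hc2 : c ^ 2 = 1 - ρ ^ 2) (ha : (1 + ρ) * a = c * t) :
    ∫⁻ y in Iic a, ENNReal.ofReal (stdNormalTail ((t - c * y) / ρ)) ∂gaussianReal 0 1
      ≤ ENNReal.ofReal (ρ * stdNormalTail t * stdNormalTail a) := by
  have hint : Integrable fun y => gaussianPDFReal 0 1 (a + (a - y) / ρ) :=
    (((integrable_gaussianPDFReal 0 1).comp_add_left a).comp_div hρ.ne').comp_sub_left a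
  rw [gaussianReal_of_var_ne_zero _ one_ne_zero,
    setLIntegral_withDensity_eq_setLIntegral_mul_non_measurable _ (measurable_gaussianPDF 0 1) _
      measurableSet_Iic (ae_of_all _ fun _ => gaussianPDF_lt_top)]
  calc _ ≤ ∫⁻ y in Iic a,
          ENNReal.ofReal (stdNormalTail t * gaussianPDFReal 0 1 (a + (a - y) / ρ)) := by
        refine setLIntegral_mono' measurableSet_Iic fun y hy => ?_
        rw [Pi.mul_apply, gaussianPDF, ← ENNReal.ofReal_mul (gaussianPDFReal_nonneg 0 1 y)]
        exact ENNReal.ofReal_le_ofReal (gaussianPDFReal_mul_stdNormalTail_le hρ hc hc2 ha hy)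
    _ = ENNReal.ofReal (∫ y in Iic a, stdNormalTail t * gaussianPDFReal 0 1 (a + (a - y) / ρ)) :=
        (ofReal_integral_eq_lintegral_ofReal (hint.const_mul _).integrableOn
          (ae_of_all _ fun y => mul_nonneg (stdNormalTail_nonneg t)
            (gaussianPDFReal_nonneg 0 1 _))).symm
    _ = ENNReal.ofReal (ρ * stdNormalTail t * stdNormalTail a) := by
        rw [integral_const_mul, integral_Iic_gaussianPDFReal_reflect hρ]
        ring_nf

lemma gaussianReal_prod_joint_tail_le_of_pos {ρ c : ℝ} (hρ : 0 < ρ) (hc : 0 < c)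
    (hc2 : c ^ 2 = 1 - ρ ^ 2) (t : ℝ) :
    (gaussianReal 0 1).prod (gaussianReal 0 1) {p | t ≤ p.1 ∧ t ≤ ρ * p.1 + c * p.2}
      ≤ ENNReal.ofReal ((1 + ρ) * stdNormalTail t * stdNormalTail ((1 - ρ) * t / c)) := by
  set γ := gaussianReal 0 1
  set D := {p : ℝ × ℝ | t ≤ p.1 ∧ t ≤ ρ * p.1 + c * p.2}
  set a := (1 - ρ) * t / c with ha_def
  have ha : (1 + ρ) * a = c * t := by
    rw [ha_def]
    field_simp
    linear_combination -t * hc2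
  have hD : MeasurableSet D :=
    (measurableSet_le measurable_const measurable_fst).inter
      (measurableSet_le measurable_const
        ((measurable_fst.const_mul ρ).add (measurable_snd.const_mul c)))
  have hIic : ∫⁻ y in Iic a, γ ((fun x => (x, y)) ⁻¹' D) ∂γ
      ≤ ENNReal.ofReal (ρ * stdNormalTail t * stdNormalTail a) := by
    refine le_trans (setLIntegral_mono' measurableSet_Iic fun y _ => ?_)
      (setLIntegral_Iic_stdNormalTail_le hρ hc.le hc2 ha)
    rw [← gaussianReal_Ici_eq_stdNormalTail]
    exact measure_mono fun x hx => (div_le_iff₀ hρ).2 (by linarith [hx.2])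
  have hIoi : ∫⁻ y in Ioi a, γ ((fun x => (x, y)) ⁻¹' D) ∂γ
      ≤ ENNReal.ofReal (stdNormalTail t * stdNormalTail a) := by
    calc _ ≤ ∫⁻ _ in Ioi a, γ (Ici t) ∂γ :=
          setLIntegral_mono' measurableSet_Ioi fun y _ => measure_mono fun x hx => hx.1
      _ = _ := by
        rw [setLIntegral_const, gaussianReal_Ici_eq_stdNormalTail,
          gaussianReal_Ioi_eq_stdNormalTail, ENNReal.ofReal_mul (stdNormalTail_nonneg t)]
  rw [Measure.prod_apply_symm hD, ← lintegral_add_compl _ measurableSet_Iic, compl_Iic]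
  calc _ ≤ ENNReal.ofReal (ρ * stdNormalTail t * stdNormalTail a)
        + ENNReal.ofReal (stdNormalTail t * stdNormalTail a) := add_le_add hIic hIoi
    _ = _ := by
      have := stdNormalTail_nonneg t
      have := stdNormalTail_nonneg a
      rw [← ENNReal.ofReal_add (by positivity) (by positivity)]
      ring_nf

theorem gaussianReal_prod_joint_tail_le {ρ c : ℝ} (hρ : 0 ≤ ρ) (hc : 0 < c)
    (hc2 : c ^ 2 = 1 - ρ ^ 2) (t : ℝ) :
    (gaussianReal 0 1).prod (gaussianReal 0 1) {p | t ≤ p.1 ∧ t ≤ ρ * p.1 + c * p.2}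
      ≤ ENNReal.ofReal ((1 + ρ) * stdNormalTail t * stdNormalTail ((1 - ρ) * t / c)) := by
  rcases hρ.eq_or_lt with rfl | hρ_pos
  · obtain rfl : c = 1 := by nlinarith
    calc _ ≤ (gaussianReal 0 1).prod (gaussianReal 0 1) (Ici t ×ˢ Ici t) :=
          measure_mono fun p hp => ⟨hp.1, by simpa using hp.2⟩
      _ = _ := by
        rw [Measure.prod_prod, gaussianReal_Ici_eq_stdNormalTail,
          ← ENNReal.ofReal_mul (stdNormalTail_nonneg t)]
        norm_num
  · exact gaussianReal_prod_joint_tail_le_of_pos hρ_pos hc hc2 t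

/-- Let `(ζ, ζ')` be jointly Gaussian standard normal with correlation
`ρ ∈ [0, 1)` (realized as `ζ' = ρ ζ + √(1−ρ²) ζ₂` with `ζ, ζ₂` independent standard
normals). Then for every `t > 0`,
`P(ζ ≥ t, ζ' ≥ t) ≤ (1+ρ) · G(t) · G((1−ρ) t / √(1−ρ²))`. -/
theorem stmt15 {Ω : Type*} [MeasurableSpace Ω] (μ : Measure Ω) [IsProbabilityMeasure μ]
    (ζ ζ₂ : Ω → ℝ) (hζm : Measurable ζ) (hζ₂m : Measurable ζ₂)
    (hindep : IndepFun ζ ζ₂ μ)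
    (hζlaw : Measure.map ζ μ = gaussianReal 0 1)
    (hζ₂law : Measure.map ζ₂ μ = gaussianReal 0 1)
    (ρ : ℝ) (hρ₁ : 0 ≤ ρ) (hρ₂ : ρ < 1)
    (ζ' : Ω → ℝ) (hζ' : ∀ ω, ζ' ω = ρ * ζ ω + Real.sqrt (1 - ρ ^ 2) * ζ₂ ω) :
    ∀ t : ℝ, 0 < t →
      μ {ω | t ≤ ζ ω ∧ t ≤ ζ' ω}
        ≤ ENNReal.ofReal ((1 + ρ) * stdNormalTail t
            * stdNormalTail ((1 - ρ) * t / Real.sqrt (1 - ρ ^ 2))) := by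
  intro t _
  have hρ_sq : 0 < 1 - ρ ^ 2 := by nlinarith
  have hlaw : μ.map (fun ω => (ζ ω, ζ₂ ω)) = (gaussianReal 0 1).prod (gaussianReal 0 1) := by
    rw [(indepFun_iff_map_prod_eq_prod_map_map hζm.aemeasurable hζ₂m.aemeasurable).1 hindep,
      hζlaw, hζ₂law]
  have hevent : {ω | t ≤ ζ ω ∧ t ≤ ζ' ω} = (fun ω => (ζ ω, ζ₂ ω)) ⁻¹'
      {p | t ≤ p.1 ∧ t ≤ ρ * p.1 + Real.sqrt (1 - ρ ^ 2) * p.2} := by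
    ext ω
    simp [hζ' ω]
  rw [hevent]
  refine (Measure.le_map_apply (hζm.prodMk hζ₂m).aemeasurable _).trans ?_
  rw [hlaw]
  exact gaussianReal_prod_joint_tail_le hρ₁ (Real.sqrt_pos.2 hρ_sq) (Real.sq_sqrt hρ_sq.le) t
end
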